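/- Let f^{[α]}, g1^{[β1]}, g2^{[β2]} ∈ I^{[Σ]} with f, g1, g2 ≠ 0 and suppose there exist t1, t2 ∈ T(A), b1, b2 ∈ ⟨Y⟩ with LT(f) = LT(t1 g1 b1) + LT(t2 g2 b2) and sig(t1 β1 b1) ≻ sig(t2 β2 b2). Then there exist an ambiguity a ∈ amb(g1^{[β1]}, g2^{[β2]}), a G-polynomial g3^{[β3]} = G-Pol(a) (with Bézout coefficients chosen so that sig(G-Pol(a)) ≃ SIG(a)), t3 ∈ T(A) and b3 ∈ ⟨Y⟩ such that LT(t3 g3 b3) = LT(f) and sig(t3 β3 b3) ≃ sig(t1 β1 b1). -/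

import Mathlib

/-!  Signature Gröbner bases in the mixed algebra `R[x₁,…,x_k]⟨y₁,…,y_n⟩`
over a principal ideal domain `R`, following Hofstadler–Verron. -/

open Finsupp

/-- A mixed monomial `v·w`, with `v` a commutative monomial in `x₁,…,x_k`
(recorded by its exponent vector) and `w` a word in the noncommutative
variables `y₁,…,y_n`. -/
@[ext]
structure MMon (k n : ℕ) where
  c : Fin k →₀ ℕ
  w : FreeMonoid (Fin n)

namespace MMon

instance (k n : ℕ) : One (MMon k n) := ⟨⟨0, 1⟩⟩
noncomputable instance (k n : ℕ) : Mul (MMon k n) := ⟨fun a b => ⟨a.c + b.c, a.w * b.w⟩⟩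

@[simp] lemma mul_c {k n : ℕ} (a b : MMon k n) : (a * b).c = a.c + b.c := rfl
@[simp] lemma mul_w {k n : ℕ} (a b : MMon k n) : (a * b).w = a.w * b.w := rfl
@[simp] lemma one_c {k n : ℕ} : (1 : MMon k n).c = 0 := rfl
@[simp] lemma one_w {k n : ℕ} : (1 : MMon k n).w = 1 := rfl

noncomputable instance (k n : ℕ) : Monoid (MMon k n) where
  mul_assoc a b c := by ext : 1 <;> simp [add_assoc, mul_assoc]
  one_mul a := by ext : 1 <;> simp
  mul_one a := by ext : 1 <;> simp

end MMon

/-- A module monomial `u·a·ε_i·b` of the free bimodule `Σ = (A ⊗_{R[X]} A)^r`. -/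
@[ext]
structure ModMon (k n r : ℕ) where
  u : Fin k →₀ ℕ
  a : FreeMonoid (Fin n)
  i : Fin r
  b : FreeMonoid (Fin n)

instance {k n r : ℕ} [NeZero r] : Inhabited (ModMon k n r) := ⟨⟨0, 1, default, 1⟩⟩

/-- The mixed algebra `A = R[x₁,…,x_k]⟨y₁,…,y_n⟩`, realised as the monoid
algebra of the monoid of mixed monomials. -/
abbrev MixedAlg (R : Type) [CommRing R] (k n : ℕ) : Type := MonoidAlgebra R (MMon k n)

/-- The free `A`-bimodule `Σ = (A ⊗_{R[X]} A)^r`, realised as the free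
`R`-module on the module monomials `u·a·ε_i·b`. -/
abbrev SigModule (R : Type) [CommRing R] (k n r : ℕ) : Type := ModMon k n r →₀ R

section Defs

variable {R : Type} [CommRing R] {k n r : ℕ}

/-- The term `c·m` of `A` (an element of `T(A)` when `c ≠ 0`). -/
noncomputable def trm (m : MMon k n) (c : R) : MixedAlg R k n := MonoidAlgebra.single m c

/-- The word `b ∈ ⟨Y⟩`, viewed as an element of `A`. -/
noncomputable def wrd (b : FreeMonoid (Fin n)) : MixedAlg R k n :=
  MonoidAlgebra.single ⟨0, b⟩ 1

/-- Multiplication `m·σ` of a module monomial by a mixed monomial on the left. -/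
noncomputable def mulL (m : MMon k n) (σ : ModMon k n r) : ModMon k n r :=
  ⟨m.c + σ.u, m.w * σ.a, σ.i, σ.b⟩

/-- Multiplication `σ·m` of a module monomial by a mixed monomial on the right. -/
noncomputable def mulR (σ : ModMon k n r) (m : MMon k n) : ModMon k n r :=
  ⟨σ.u + m.c, σ.a, σ.i, σ.b * m.w⟩

/-- The two-sided multiple `m·σ·b` of a module monomial by a mixed monomial `m`
on the left and a word `b` on the right. -/
noncomputable def mulLR (m : MMon k n) (σ : ModMon k n r) (b : FreeMonoid (Fin n)) : ModMon k n r :=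
  ⟨m.c + σ.u, m.w * σ.a, σ.i, σ.b * b⟩

/-- The left action of `A` on the bimodule `Σ`. -/
noncomputable def actL (f : MixedAlg R k n) (α : SigModule R k n r) : SigModule R k n r :=
  Finsupp.sum f.coeff fun m cm => Finsupp.sum α fun σ cσ => Finsupp.single (mulL m σ) (cm * cσ)

/-- The right action of `A` on the bimodule `Σ`. -/
noncomputable def actR (α : SigModule R k n r) (f : MixedAlg R k n) : SigModule R k n r :=
  Finsupp.sum f.coeff fun m cm => Finsupp.sum α fun σ cσ => Finsupp.single (mulR σ m) (cσ * cm)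

/-- The two-sided multiple `t·α·b` of `α ∈ Σ` by the term `t = c·m` on the left
and the word `b` on the right. -/
noncomputable def scaleLR (m : MMon k n) (c : R) (α : SigModule R k n r)
    (b : FreeMonoid (Fin n)) : SigModule R k n r :=
  Finsupp.sum α fun σ cσ => Finsupp.single (mulLR m σ b) (c * cσ)

/-- The `A`-bimodule homomorphism `Σ → A`, `α ↦ ᾱ`, sending `ε_i` to `f_i`
(where `F i = f_i` are the generators). -/
noncomputable def barMap (F : Fin r → MixedAlg R k n) (α : SigModule R k n r) :
    MixedAlg R k n :=
  Finsupp.sum α fun σ cσ =>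
    trm ⟨σ.u, σ.a⟩ cσ * F σ.i * wrd σ.b

/-- The basis vector `ε_i` of `Σ`. -/
noncomputable def epsMod (i : Fin r) : SigModule R k n r :=
  Finsupp.single ⟨0, 1, i, 1⟩ 1

/-- The labeled module `I^{[Σ]}`: pairs `f^{[α]}` with `ᾱ = f`. -/
def Labeled (F : Fin r → MixedAlg R k n) (p : MixedAlg R k n × SigModule R k n r) : Prop :=
  barMap F p.2 = p.1

/-- A syzygy of `I^{[Σ]}`: an element `α ∈ Σ` with `ᾱ = 0`. -/
def IsSyzygy (F : Fin r → MixedAlg R k n) (γ : SigModule R k n r) : Prop :=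
  barMap F γ = 0

section Orders

variable [LinearOrder (MMon k n)] [LinearOrder (ModMon k n r)]

/-- The leading monomial of `f ∈ A` (with `LM 0 = ⊥`). -/
noncomputable def LMb (f : MixedAlg R k n) : WithBot (MMon k n) := f.coeff.support.max

/-- The leading monomial of `f ∈ A` (defaulting to `1` for `f = 0`). -/
noncomputable def LMd (f : MixedAlg R k n) : MMon k n := WithBot.unbotD 1 (f.coeff.support.max)

/-- The leading coefficient of `f ∈ A` (`0` for `f = 0`). -/
noncomputable def LC (f : MixedAlg R k n) : R := f.coeff (LMd f)

/-- The leading term of `f ∈ A`, as an element of `A` (`0` for `f = 0`). -/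
noncomputable def LTerm (f : MixedAlg R k n) : MixedAlg R k n := trm (LMd f) (LC f)

/-- The signature monomial of `α ∈ Σ` (with `⊥` for `α = 0`): the `⪯`-largest
monomial of the support of `α`. -/
noncomputable def sigb (α : SigModule R k n r) : WithBot (ModMon k n r) := α.support.max

variable [NeZero r]

/-- The signature monomial of `α ∈ Σ`, defaulting for `α = 0`. -/
noncomputable def sigMd (α : SigModule R k n r) : ModMon k n r :=
  WithBot.unbotD default (α.support.max)

/-- The coefficient of the signature of `α`. -/
noncomputable def sigC (α : SigModule R k n r) : R := α (sigMd α)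

/-- The signature `sig(α)` of `α ∈ Σ`, as a term, i.e. a single-term element of
`Σ` (`0` for `α = 0`).  Equality `sig α = sig β` of signatures as *terms* is
`sigT α = sigT β`; the relation `sig α ≃ sig β` is `sigb α = sigb β`; the
relation `sig α ≺ sig β` is `sigb α < sigb β`. -/
noncomputable def sigT (α : SigModule R k n r) : SigModule R k n r :=
  Finsupp.single (sigMd α) (sigC α)

end Orders

/-- The compatibility requirements on the chosen monomial ordering on `M(A)`
and module ordering on `M(Σ)`: both are compatible with multiplication,
both are well-orderings, and they are compatible with each other. -/
structure IsOrderSetting (k n r : ℕ) [LinearOrder (MMon k n)]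
    [LinearOrder (ModMon k n r)] : Prop where
  mon_wf : WellFounded ((· < ·) : MMon k n → MMon k n → Prop)
  mod_wf : WellFounded ((· < ·) : ModMon k n r → ModMon k n r → Prop)
  mon_mul : ∀ a b m m' : MMon k n, m ≤ m' → a * m * b ≤ a * m' * b
  mod_mul : ∀ (m : MMon k n) (b : FreeMonoid (Fin n)) (σ τ : ModMon k n r),
      σ ≤ τ → mulLR m σ b ≤ mulLR m τ b
  compat₁ : ∀ (u v : Fin k →₀ ℕ) (a b : FreeMonoid (Fin n)) (i : Fin r),
      (⟨u, a⟩ : MMon k n) < ⟨v, b⟩ ↔ (⟨u, a, i, 1⟩ : ModMon k n r) < ⟨v, b, i, 1⟩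
  compat₂ : ∀ (u v : Fin k →₀ ℕ) (a b : FreeMonoid (Fin n)) (i : Fin r),
      (⟨u, a⟩ : MMon k n) < ⟨v, b⟩ ↔ (⟨u, 1, i, a⟩ : ModMon k n r) < ⟨v, 1, i, b⟩

end Defs

/-! ### Ambiguities -/

/-- `WordAmb a b c d p q` says that `(a ⊗ b, c ⊗ d, p, q)` is an ambiguity
(overlap, inclusion or external) of the words `p` and `q`. -/
inductive WordAmb {n : ℕ} :
    FreeMonoid (Fin n) → FreeMonoid (Fin n) → FreeMonoid (Fin n) → FreeMonoid (Fin n) →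
    FreeMonoid (Fin n) → FreeMonoid (Fin n) → Prop
  | overlap₁ (a b p q : FreeMonoid (Fin n)) (h : a * p = q * b)
      (ha : a ≠ 1) (hb : b ≠ 1) (hla : a.length < q.length) (hlb : b.length < p.length) :
      WordAmb a 1 1 b p q
  | overlap₂ (a b p q : FreeMonoid (Fin n)) (h : p * a = b * q)
      (ha : a ≠ 1) (hb : b ≠ 1) (hla : a.length < q.length) (hlb : b.length < p.length) :
      WordAmb 1 a b 1 p q
  | inclusion₁ (a b p q : FreeMonoid (Fin n)) (h : p = a * q * b) :
      WordAmb 1 1 a b p q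
  | inclusion₂ (a b p q : FreeMonoid (Fin n)) (h : a * p * b = q) :
      WordAmb a b 1 1 p q
  | external₁ (m p q : FreeMonoid (Fin n)) :
      WordAmb 1 (m * q) (p * m) 1 p q
  | external₂ (m p q : FreeMonoid (Fin n)) :
      WordAmb (q * m) 1 1 (m * p) p q

section Amb

variable {R : Type} [CommRing R] {k n r : ℕ}
variable [LinearOrder (MMon k n)] [LinearOrder (ModMon k n r)]

/-- `IsAmb f g m₁ n₁ m₂ n₂` says that `(m₁ ⊗ n₁, m₂ ⊗ n₂)` is an ambiguity of the
(nonzero) polynomials `f` and `g`: an ambiguity of the word parts of their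
leading monomials, with left cofactors completed by `lcm(u,v)/u` resp.
`lcm(u,v)/v` on the commutative parts. -/
def IsAmb (f g : MixedAlg R k n) (m₁ : MMon k n) (n₁ : FreeMonoid (Fin n))
    (m₂ : MMon k n) (n₂ : FreeMonoid (Fin n)) : Prop :=
  ∃ a b c d : FreeMonoid (Fin n),
    WordAmb a b c d (LMd f).w (LMd g).w ∧
    m₁ = ⟨((LMd f).c ⊔ (LMd g).c) - (LMd f).c, a⟩ ∧ n₁ = b ∧
    m₂ = ⟨((LMd f).c ⊔ (LMd g).c) - (LMd g).c, c⟩ ∧ n₂ = d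

/-- The leading monomial `LM(a) = LM(m₁ f n₁) = LM(m₂ g n₂)` of an ambiguity. -/
noncomputable def ambLM (f : MixedAlg R k n) (m₁ : MMon k n) (n₁ : FreeMonoid (Fin n)) :
    MMon k n :=
  m₁ * LMd f * ⟨0, n₁⟩

variable [IsDomain R] [GCDMonoid R]

/-- The cofactor `lcmlc(f,g)/LC(f)`. -/
noncomputable def cofL (f g : MixedAlg R k n) : R :=
  Classical.choose (dvd_lcm_left (LC f) (LC g))

/-- The cofactor `lcmlc(f,g)/LC(g)`. -/
noncomputable def cofR (f g : MixedAlg R k n) : R :=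
  Classical.choose (dvd_lcm_right (LC f) (LC g))

variable [NeZero r]

/-- The signature `SIG(a) = max(sig(c_f m₁ α n₁), −sig(c_g m₂ β n₂))` (first in
case of tie) of an ambiguity `a = (m₁ ⊗ n₁, m₂ ⊗ n₂)` of `f^{[α]]`, `g^{[β]}`,
as a term (single-term element) of `Σ`. -/
noncomputable def ambSIG (f g : MixedAlg R k n) (α β : SigModule R k n r)
    (m₁ : MMon k n) (n₁ : FreeMonoid (Fin n)) (m₂ : MMon k n) (n₂ : FreeMonoid (Fin n)) :
    SigModule R k n r :=
  if sigb (scaleLR m₂ (cofR f g) β n₂) ≤ sigb (scaleLR m₁ (cofL f g) α n₁) then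
    sigT (scaleLR m₁ (cofL f g) α n₁)
  else
    - sigT (scaleLR m₂ (cofR f g) β n₂)

/-- An ambiguity is regular if `sig(m₁ α n₁) ≄ sig(m₂ β n₂)`. -/
def RegAmb (α β : SigModule R k n r) (m₁ : MMon k n) (n₁ : FreeMonoid (Fin n))
    (m₂ : MMon k n) (n₂ : FreeMonoid (Fin n)) : Prop :=
  sigb (scaleLR m₁ (1 : R) α n₁) ≠ sigb (scaleLR m₂ (1 : R) β n₂)

/-- An ambiguity is singular if `sig(c_f m₁ α n₁) = sig(c_g m₂ β n₂)`. -/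
def SingAmb (f g : MixedAlg R k n) (α β : SigModule R k n r) (m₁ : MMon k n)
    (n₁ : FreeMonoid (Fin n)) (m₂ : MMon k n) (n₂ : FreeMonoid (Fin n)) : Prop :=
  sigT (scaleLR m₁ (cofL f g) α n₁) = sigT (scaleLR m₂ (cofR f g) β n₂)

/-- The polynomial part of the S-polynomial of an ambiguity. -/
noncomputable def SPolP (f g : MixedAlg R k n) (m₁ : MMon k n) (n₁ : FreeMonoid (Fin n))
    (m₂ : MMon k n) (n₂ : FreeMonoid (Fin n)) : MixedAlg R k n :=
  trm m₁ (cofL f g) * f * wrd n₁ - trm m₂ (cofR f g) * g * wrd n₂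

/-- The module part of the S-polynomial of an ambiguity. -/
noncomputable def SPolM (f g : MixedAlg R k n) (α β : SigModule R k n r) (m₁ : MMon k n)
    (n₁ : FreeMonoid (Fin n)) (m₂ : MMon k n) (n₂ : FreeMonoid (Fin n)) :
    SigModule R k n r :=
  scaleLR m₁ (cofL f g) α n₁ - scaleLR m₂ (cofR f g) β n₂

/-- The polynomial part of the G-polynomial of an ambiguity, w.r.t. Bézout
coefficients `c`, `d`. -/
noncomputable def GPolP (c d : R) (f g : MixedAlg R k n) (m₁ : MMon k n)
    (n₁ : FreeMonoid (Fin n)) (m₂ : MMon k n) (n₂ : FreeMonoid (Fin n)) : MixedAlg R k n :=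
  trm m₁ c * f * wrd n₁ + trm m₂ d * g * wrd n₂

/-- The module part of the G-polynomial of an ambiguity, w.r.t. Bézout
coefficients `c`, `d`. -/
noncomputable def GPolM (c d : R) (α β : SigModule R k n r) (m₁ : MMon k n)
    (n₁ : FreeMonoid (Fin n)) (m₂ : MMon k n) (n₂ : FreeMonoid (Fin n)) :
    SigModule R k n r :=
  scaleLR m₁ c α n₁ + scaleLR m₂ d β n₂

/-- `BezoutFor c d f g`: `c, d` are Bézout coefficients for `LC f`, `LC g`. -/
def BezoutFor (c d : R) (f g : MixedAlg R k n) : Prop :=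
  c * LC f + d * LC g = gcd (LC f) (LC g)

end Amb

/-! ### Reductions, bases, cover -/

section Red

variable {R : Type} [CommRing R] {k n r : ℕ}
variable [LinearOrder (MMon k n)] [LinearOrder (ModMon k n r)]

/-- `f^{[α]}` is (top) sig-reducible by `G`: there are `g^{[β]} ∈ G`, a term
`t = c·m` and a word `b` with `LT(t g b) = LT(f) > LT(f - t g b)` and
`sig(t β b) ⪯ sig(α)`. -/
def SigReducible (G : Set (MixedAlg R k n × SigModule R k n r))
    (f : MixedAlg R k n) (α : SigModule R k n r) : Prop :=
  ∃ g β, (g, β) ∈ G ∧ ∃ (m : MMon k n) (c : R) (b : FreeMonoid (Fin n)), c ≠ 0 ∧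
    LTerm (trm m c * g * wrd b) = LTerm f ∧
    LMb (f - trm m c * g * wrd b) < LMb f ∧
    sigb (scaleLR m c β b) ≤ sigb α

/-- `f^{[α]}` is regular sig-reducible by `G`. -/
def RegSigReducible (G : Set (MixedAlg R k n × SigModule R k n r))
    (f : MixedAlg R k n) (α : SigModule R k n r) : Prop :=
  ∃ g β, (g, β) ∈ G ∧ ∃ (m : MMon k n) (c : R) (b : FreeMonoid (Fin n)), c ≠ 0 ∧
    LTerm (trm m c * g * wrd b) = LTerm f ∧
    LMb (f - trm m c * g * wrd b) < LMb f ∧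
    sigb (scaleLR m c β b) < sigb α

/-- `f^{[α]}` is super reducible by `G`: there are `g^{[β]} ∈ G`, a term `t` and
a word `b` with `sig(α) = sig(t β b)` (as terms) and `LM(f) = LM(t g b)`. -/
def SuperReducible [NeZero r] (G : Set (MixedAlg R k n × SigModule R k n r))
    (f : MixedAlg R k n) (α : SigModule R k n r) : Prop :=
  ∃ g β, (g, β) ∈ G ∧ ∃ (m : MMon k n) (c : R) (b : FreeMonoid (Fin n)), c ≠ 0 ∧
    sigT α = sigT (scaleLR m c β b) ∧
    LMb f = LMb (trm m c * g * wrd b)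

/-- `α ∈ Σ` is (top) reducible by the set `H ⊆ Σ`: `sig(α) = sig(t γ b)` for
some `γ ∈ H`, term `t` and word `b`. -/
def ModReducible [NeZero r] (H : Set (SigModule R k n r)) (α : SigModule R k n r) : Prop :=
  ∃ γ ∈ H, ∃ (m : MMon k n) (c : R) (b : FreeMonoid (Fin n)), c ≠ 0 ∧
    sigT α = sigT (scaleLR m c γ b)

/-- `G` is a (strong) signature Gröbner basis of `I^{[Σ]}`. -/
def IsSigGB (F : Fin r → MixedAlg R k n) (G : Set (MixedAlg R k n × SigModule R k n r)) :
    Prop :=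
  ∀ f α, barMap F α = f → f ≠ 0 → SigReducible G f α

/-- `G` is a signature Gröbner basis of `I^{[Σ]}` up to (module monomial)
signature `σ`. -/
def IsSigGBUpTo (F : Fin r → MixedAlg R k n)
    (G : Set (MixedAlg R k n × SigModule R k n r)) (σ : WithBot (ModMon k n r)) : Prop :=
  ∀ f α, barMap F α = f → f ≠ 0 → sigb α < σ → SigReducible G f α

/-- `H` is a syzygy basis of `I^{[Σ]}`. -/
def IsSyzBasis [NeZero r] (F : Fin r → MixedAlg R k n) (H : Set (SigModule R k n r)) :
    Prop :=
  ∀ γ, IsSyzygy F γ → γ ≠ 0 → ModReducible H γ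

variable [IsDomain R] [GCDMonoid R] [NeZero r]

/-- `G` is complete: the G-polynomials (w.r.t. non-singular Bézout coefficients)
of all ambiguities of `G` are sig-reducible by `G`. -/
def CompleteSet (G : Set (MixedAlg R k n × SigModule R k n r)) : Prop :=
  ∀ g₁ β₁ g₂ β₂, (g₁, β₁) ∈ G → (g₂, β₂) ∈ G →
    ∀ m₁ n₁ m₂ n₂, IsAmb g₁ g₂ m₁ n₁ m₂ n₂ →
      ∀ c d, BezoutFor c d g₁ g₂ →
        sigb (GPolM c d β₁ β₂ m₁ n₁ m₂ n₂) = sigb (ambSIG g₁ g₂ β₁ β₂ m₁ n₁ m₂ n₂) →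
        SigReducible G (GPolP c d g₁ g₂ m₁ n₁ m₂ n₂) (GPolM c d β₁ β₂ m₁ n₁ m₂ n₂)

/-- `MonLcm σ₁ σ₂ τ`: the least common multiple `lcm(σ₁,σ₂)` of the module
monomials `σ₁ = u₁a₁ε_jb₁`, `σ₂ = u₂a₂ε_jb₂` is defined and equals `τ`. -/
def MonLcm (σ₁ σ₂ τ : ModMon k n r) : Prop :=
  σ₁.i = σ₂.i ∧ τ.i = σ₁.i ∧ τ.u = σ₁.u ⊔ σ₂.u ∧
  ((τ.a = σ₁.a ∧ ∃ s, σ₁.a = s * σ₂.a) ∨ (τ.a = σ₂.a ∧ ∃ s, σ₂.a = s * σ₁.a)) ∧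
  ((τ.b = σ₁.b ∧ ∃ s, σ₁.b = σ₂.b * s) ∨ (τ.b = σ₂.b ∧ ∃ s, σ₂.b = σ₁.b * s))

/-- `H` is sig-complete: all sig-Combinations of elements of `H` are reducible
by `H`. -/
def SigCompleteSet (H : Set (SigModule R k n r)) : Prop :=
  ∀ γ₁ ∈ H, ∀ γ₂ ∈ H, ∀ τ, MonLcm (sigMd γ₁) (sigMd γ₂) τ →
    ∀ (m₁ : MMon k n) (b₁ : FreeMonoid (Fin n)) (m₂ : MMon k n) (b₂ : FreeMonoid (Fin n)),
      mulLR m₁ (sigMd γ₁) b₁ = τ → mulLR m₂ (sigMd γ₂) b₂ = τ →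
      ∀ c d : R, c * sigC γ₁ + d * sigC γ₂ = gcd (sigC γ₁) (sigC γ₂) →
        ModReducible H (scaleLR m₁ c γ₁ b₁ + scaleLR m₂ d γ₂ b₂)

/-- The ambiguity `a` (of `g₁^{[β₁]}`, `g₂^{[β₂]}`), with signature `SIG(a)` and
leading monomial `LM(a)`, is covered by `(G, H)`: there are `g^{[β]} ∈ G`,
`γ ∈ H`, terms `t, t'` (possibly `0`) and words `b, b'` with
`SIG(a) = sig(t β b) + sig(t' γ b')` and `LM(t g b) < LM(a)`. -/
def CoveredBy (G : Set (MixedAlg R k n × SigModule R k n r))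
    (H : Set (SigModule R k n r)) (Sig : SigModule R k n r) (Lm : MMon k n) : Prop :=
  ∃ g β, (g, β) ∈ G ∧ ∃ γ ∈ H,
    ∃ (m : MMon k n) (c : R) (b : FreeMonoid (Fin n))
      (m' : MMon k n) (c' : R) (b' : FreeMonoid (Fin n)),
      Sig = sigT (scaleLR m c β b) + sigT (scaleLR m' c' γ b') ∧
      LMb (trm m c * g * wrd b) < (Lm : WithBot (MMon k n))

end Red

/-! The leading terms `LT(tᵢ gᵢ bᵢ)` must be like terms, so `W = m₁·LM(g₁)·b₁ = m₂·LM(g₂)·b₂`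
is `LM(f)` and `LC(f) = c₁ LC(g₁) + c₂ LC(g₂)`. The two occurrences of the words of `LM(g₁)` and
`LM(g₂)` inside `W` factor through an ambiguity `a = (M₁ ⊗ B, M₂ ⊗ D)`: `mᵢ = m₃ Mᵢ`,
`b₁ = B b₃`, `b₂ = D b₃`. For Bézout coefficients `c ≠ 0, d` the G-polynomial has leading term
`gcd(LC g₁, LC g₂)·LM(a)`, and the gcd divides `LC(f)`, so a multiple `t₃ = c₃ m₃` recovers
`LT(f)`. Multiplication by `m₃ ⊗ b₃` is strictly monotone on module monomials, so the strict
inequality of signatures descends to `a`: the `β₁`-part dominates the signature of `G-Pol(a)`,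
of `SIG(a)` and of `t₃ G-Pol(a) b₃`. -/

theorem Finset.max_image_of_monotone {α β : Type*} [LinearOrder α] [LinearOrder β]
    [DecidableEq β] {φ : α → β} (hφ : Monotone φ) (s : Finset α) :
    (s.image φ).max = s.max.map φ := by
  rcases s.eq_empty_or_nonempty with rfl | hs
  · simp
  obtain ⟨a, ha⟩ := Finset.max_of_nonempty hs
  rw [ha, WithBot.map_coe]
  refine le_antisymm (Finset.max_le fun b hb => ?_)
    (Finset.le_max (Finset.mem_image_of_mem φ (Finset.mem_of_max ha)))
  obtain ⟨x, hx, rfl⟩ := Finset.mem_image.1 hb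
  exact WithBot.coe_le_coe.2 (hφ (Finset.le_max_of_eq hx ha))

namespace Finsupp

variable {α β R : Type*} [LinearOrder α] [LinearOrder β]

theorem support_max_mapDomain_le [AddCommMonoid R] {φ : α → β} (hφ : Monotone φ)
    (v : α →₀ R) : (v.mapDomain φ).support.max ≤ v.support.max.map φ := by
  classical
  exact (Finset.max_mono mapDomain_support).trans_eq (Finset.max_image_of_monotone hφ _)

theorem support_max_mapDomain [AddCommMonoid R] {φ : α → β} (hφ : StrictMono φ)
    (v : α →₀ R) : (v.mapDomain φ).support.max = v.support.max.map φ := by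
  classical
  rw [mapDomain_support_of_injective hφ.injective, Finset.max_image_of_monotone hφ.monotone]

theorem support_max_add_le [AddZeroClass R] (v w : α →₀ R) :
    (v + w).support.max ≤ v.support.max ⊔ w.support.max := by
  classical
  exact (Finset.max_mono support_add).trans_eq Finset.max_union

theorem support_max_eq_of_le [Zero R] {v : α →₀ R} {a : α} (h₀ : v a ≠ 0)
    (hle : v.support.max ≤ a) : v.support.max = a :=
  le_antisymm hle (Finset.le_max (mem_support_iff.2 h₀))

theorem support_max_add_of_lt [AddZeroClass R] {v w : α →₀ R}
    (h : w.support.max < v.support.max) : (v + w).support.max = v.support.max := by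
  obtain ⟨a, ha⟩ := WithBot.ne_bot_iff_exists.1 h.ne_bot
  have hle := (support_max_add_le v w).trans (sup_eq_left.2 h.le).le
  rw [← ha] at h hle ⊢
  have hwa : w a = 0 := by
    by_contra hne
    exact (Finset.le_max (mem_support_iff.2 hne)).not_gt h
  refine support_max_eq_of_le ?_ hle
  rw [add_apply, hwa, add_zero]
  exact mem_support_iff.1 (Finset.mem_of_max ha.symm)

theorem eq_of_single_eq_single_add_single [AddZeroClass R] {a b c : α} {x y z : R}
    (hy : y ≠ 0) (hz : z ≠ 0) (h : single a x = single b y + single c z) : b = c := by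
  by_contra hbc
  have hb := DFunLike.congr_fun h b
  have hc := DFunLike.congr_fun h c
  rw [add_apply, single_eq_same, single_eq_of_ne' (Ne.symm hbc), add_zero] at hb
  rw [add_apply, single_eq_same, single_eq_of_ne' hbc, zero_add] at hc
  exact hbc ((single_apply_ne_zero.1 (hb ▸ hy)).1.trans (single_apply_ne_zero.1 (hc ▸ hz)).1.symm)

end Finsupp

theorem FreeMonoid.mul_eq_mul_cases {X : Type*} {a b c d : FreeMonoid X} (h : a * b = c * d) :
    (∃ t, c = a * t ∧ b = t * d) ∨ ∃ t, a = c * t ∧ d = t * b :=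
  List.append_eq_append_iff.1 h

namespace WordAmb

variable {n : ℕ}

theorem swap : ∀ {A B C D p q : FreeMonoid (Fin n)}, WordAmb A B C D p q → WordAmb C D A B q p
  | _, _, _, _, _, _, .overlap₁ a b p q h ha hb hla hlb => .overlap₂ b a q p h.symm hb ha hlb hla
  | _, _, _, _, _, _, .overlap₂ a b p q h ha hb hla hlb => .overlap₁ b a q p h.symm hb ha hlb hla
  | _, _, _, _, _, _, .inclusion₁ a b p q h => .inclusion₂ a b q p h.symm
  | _, _, _, _, _, _, .inclusion₂ a b p q h => .inclusion₁ a b q p h.symm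
  | _, _, _, _, _, _, .external₁ m p q => .external₂ m q p
  | _, _, _, _, _, _, .external₂ m p q => .external₁ m q p

theorem exists_of_mul_eq_mul_mul {p q t r₁ r₂ : FreeMonoid (Fin n)}
    (h : p * r₁ = t * (q * r₂)) :
    ∃ B D b, WordAmb 1 B t D p q ∧ r₁ = B * b ∧ r₂ = D * b := by
  rcases FreeMonoid.mul_eq_mul_cases h with ⟨s, rfl, rfl⟩ | ⟨s, rfl, hs⟩
  · exact ⟨s * q, 1, r₂, .external₁ s p q, (mul_assoc ..).symm, (one_mul _).symm⟩
  by_cases hs₁ : s = 1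
  · subst hs₁
    exact ⟨q, 1, r₂, by simpa using WordAmb.external₁ 1 t q, by simpa using hs.symm,
      (one_mul _).symm⟩
  have hlen : 0 < s.length := Nat.pos_of_ne_zero (mt FreeMonoid.length_eq_zero.1 hs₁)
  rcases FreeMonoid.mul_eq_mul_cases hs with ⟨e, rfl, rfl⟩ | ⟨e, rfl, rfl⟩
  · exact ⟨1, e, r₁, .inclusion₁ t e _ q (mul_assoc ..).symm, (one_mul _).symm, rfl⟩
  by_cases he₁ : e = 1
  · subst he₁
    exact ⟨1, 1, r₂, .inclusion₁ t 1 _ _ (by simp), rfl, (one_mul _).symm⟩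
  by_cases ht₁ : t = 1
  · subst ht₁
    exact ⟨e, 1, r₂, .inclusion₂ 1 e _ _ (by simp), rfl, (one_mul _).symm⟩
  refine ⟨e, 1, r₂, .overlap₂ e t _ _ (mul_assoc ..) he₁ ht₁ ?_ ?_, rfl, (one_mul _).symm⟩ <;>
    · rw [FreeMonoid.length_mul]
      omega

theorem exists_of_mul_mul_eq {p q l₁ r₁ l₂ r₂ : FreeMonoid (Fin n)}
    (h : l₁ * p * r₁ = l₂ * q * r₂) :
    ∃ A B C D w b, WordAmb A B C D p q ∧
      l₁ = w * A ∧ r₁ = B * b ∧ l₂ = w * C ∧ r₂ = D * b := by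
  rw [mul_assoc, mul_assoc] at h
  rcases FreeMonoid.mul_eq_mul_cases h with ⟨t, rfl, ht⟩ | ⟨t, rfl, ht⟩
  · obtain ⟨B, D, b, hamb, rfl, rfl⟩ := exists_of_mul_eq_mul_mul ht
    exact ⟨1, B, t, D, l₁, b, hamb, (mul_one _).symm, rfl, rfl, rfl⟩
  · obtain ⟨B, D, b, hamb, rfl, rfl⟩ := exists_of_mul_eq_mul_mul ht
    exact ⟨t, D, 1, B, l₂, b, hamb.swap, rfl, rfl, (mul_one _).symm, rfl⟩

end WordAmb

namespace MMon

variable {k n : ℕ}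

instance : IsCancelMul (MMon k n) where
  mul_left_cancel _ _ _ h :=
    MMon.ext (add_left_cancel (congrArg MMon.c h)) (mul_left_cancel (congrArg MMon.w h))
  mul_right_cancel _ _ _ h :=
    MMon.ext (add_right_cancel (congrArg MMon.c h)) (mul_right_cancel (congrArg MMon.w h))

theorem mul_mul_mk_zero_assoc (m m' x : MMon k n) (b b' : FreeMonoid (Fin n)) :
    m * (m' * x * ⟨0, b'⟩) * ⟨0, b⟩ = m * m' * x * ⟨0, b' * b⟩ :=
  MMon.ext (by simp only [mul_c, add_zero, add_assoc]) (by simp only [mul_w, mul_assoc])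

theorem strictMono_mul_mul {r : ℕ} [LinearOrder (MMon k n)] [LinearOrder (ModMon k n r)]
    (hord : IsOrderSetting k n r) (a b : MMon k n) : StrictMono fun x : MMon k n => a * x * b :=
  Monotone.strictMono_of_injective (fun x y h => hord.mon_mul a b x y h)
    fun _ _ h => mul_left_cancel (mul_right_cancel h)

end MMon

section ModMon

variable {k n r : ℕ}

theorem mulLR_mulLR (m m' : MMon k n) (σ : ModMon k n r) (b b' : FreeMonoid (Fin n)) :
    mulLR m (mulLR m' σ b') b = mulLR (m * m') σ (b' * b) := by
  simp only [mulLR, MMon.mul_c, MMon.mul_w, add_assoc, mul_assoc]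

theorem map_mulLR_map_mulLR (m m' : MMon k n) (b b' : FreeMonoid (Fin n))
    (s : WithBot (ModMon k n r)) :
    (s.map (mulLR m' · b')).map (mulLR m · b) = s.map (mulLR (m * m') · (b' * b)) := by
  rw [WithBot.map_map]
  exact congrArg₂ _ (funext fun σ => mulLR_mulLR m m' σ b b') rfl

theorem mulLR_injective (m : MMon k n) (b : FreeMonoid (Fin n)) :
    Function.Injective fun σ : ModMon k n r => mulLR m σ b := by
  intro σ τ h
  simp only [mulLR, ModMon.mk.injEq] at h
  obtain ⟨hu, ha, hi, hb⟩ := h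
  exact ModMon.ext (add_left_cancel hu) (mul_left_cancel ha) hi (mul_right_cancel hb)

theorem mulLR_strictMono [LinearOrder (MMon k n)] [LinearOrder (ModMon k n r)]
    (hord : IsOrderSetting k n r) (m : MMon k n) (b : FreeMonoid (Fin n)) :
    StrictMono fun σ : ModMon k n r => mulLR m σ b :=
  Monotone.strictMono_of_injective (fun σ τ h => hord.mod_mul m b σ τ h) (mulLR_injective m b)

end ModMon

theorem MonoidAlgebra.coeff_single_mul_eq_mapDomain {R M : Type*} [Semiring R] [Monoid M]
    (m : M) (c : R) (g : MonoidAlgebra R M) :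
    (single m c * g).coeff = (c • g.coeff).mapDomain (m * ·) := by
  rw [mul_def, coeff_finsuppSum, Finsupp.mapDomain, coeff_single,
    Finsupp.sum_single_index (by simp), Finsupp.sum_smul_index' (by simp)]
  simp [smul_eq_mul]

theorem MonoidAlgebra.coeff_mul_single_one_eq_mapDomain {R M : Type*} [Semiring R] [Monoid M]
    (g : MonoidAlgebra R M) (b : M) :
    (g * single b (1 : R)).coeff = g.coeff.mapDomain (· * b) := by
  rw [mul_def, coeff_finsuppSum, Finsupp.mapDomain]
  refine Finsupp.sum_congr fun x _ => ?_
  rw [coeff_single, Finsupp.sum_single_index (by simp), mul_one, coeff_single]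

section Products

variable {R : Type} [CommRing R] {k n r : ℕ}

theorem coeff_trm_mul_mul_wrd (m : MMon k n) (c : R) (g : MixedAlg R k n)
    (b : FreeMonoid (Fin n)) :
    (trm m c * g * wrd b).coeff = (c • g.coeff).mapDomain (m * · * (⟨0, b⟩ : MMon k n)) := by
  rw [trm, wrd, MonoidAlgebra.coeff_mul_single_one_eq_mapDomain,
    MonoidAlgebra.coeff_single_mul_eq_mapDomain, ← Finsupp.mapDomain_comp]
  rfl

theorem coeff_trm_mul_mul_wrd_apply (m : MMon k n) (c : R) (g : MixedAlg R k n)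
    (b : FreeMonoid (Fin n)) (x : MMon k n) :
    (trm m c * g * wrd b).coeff (m * x * (⟨0, b⟩ : MMon k n)) = c * g.coeff x := by
  rw [coeff_trm_mul_mul_wrd,
    Finsupp.mapDomain_apply (fun _ _ h => mul_left_cancel (mul_right_cancel h))]
  rfl

theorem scaleLR_eq_mapDomain (m : MMon k n) (c : R) (α : SigModule R k n r)
    (b : FreeMonoid (Fin n)) : scaleLR m c α b = (c • α).mapDomain (mulLR m · b) := by
  rw [scaleLR, Finsupp.mapDomain, Finsupp.sum_smul_index' (by simp)]
  simp [smul_eq_mul]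

end Products

theorem exists_bezout_left_ne_zero {R : Type*} [CommRing R] [IsDomain R] [IsBezout R]
    [GCDMonoid R] (a : R) {b : R} (hb : b ≠ 0) :
    ∃ c d : R, c * a + d * b = gcd a b ∧ c ≠ 0 := by
  obtain ⟨c, d, hcd⟩ := Ideal.mem_span_pair.1 ((span_gcd a b).le (Ideal.mem_span_singleton_self _))
  by_cases hc : c = 0
  · obtain ⟨a', ha'⟩ := gcd_dvd_left a b
    obtain ⟨b', hb'⟩ := gcd_dvd_right a b
    refine ⟨b', d - a', ?_, ?_⟩
    · rw [← hcd, hc]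
      linear_combination b' * ha' - a' * hb'
    · rintro rfl
      exact hb (by rw [hb', mul_zero])
  · exact ⟨c, d, hcd, hc⟩

section Leading

variable {R : Type} [CommRing R] {k n r : ℕ}
variable [LinearOrder (MMon k n)] [LinearOrder (ModMon k n r)]

theorem LMb_eq_coe_LMd {f : MixedAlg R k n} (hf : f ≠ 0) : LMb f = LMd f := by
  obtain ⟨m, hm⟩ := Finset.max_of_nonempty
    (Finsupp.support_nonempty_iff.2 (mt MonoidAlgebra.coeff_eq_zero.1 hf))
  rw [LMb, LMd, hm]
  rfl

theorem LMd_eq_of_LMb_eq {f : MixedAlg R k n} {W : MMon k n} (h : LMb f = W) : LMd f = W := by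
  rw [LMd, ← LMb, h]
  rfl

theorem LC_ne_zero {f : MixedAlg R k n} (hf : f ≠ 0) : LC f ≠ 0 :=
  Finsupp.mem_support_iff.1 (Finset.mem_of_max (LMb_eq_coe_LMd hf))

theorem ne_zero_of_LC_ne_zero {f : MixedAlg R k n} (h : LC f ≠ 0) : f ≠ 0 := by
  rintro rfl
  exact h rfl

theorem LMb_add_le (f g : MixedAlg R k n) : LMb (f + g) ≤ LMb f ⊔ LMb g := by
  rw [LMb, MonoidAlgebra.coeff_add]
  exact Finsupp.support_max_add_le _ _

theorem eq_of_LTerm_eq_trm_add_trm {f : MixedAlg R k n} {W₁ W₂ : MMon k n} {a₁ a₂ : R}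
    (hf : f ≠ 0) (h₁ : a₁ ≠ 0) (h₂ : a₂ ≠ 0) (h : LTerm f = trm W₁ a₁ + trm W₂ a₂) :
    W₁ = W₂ ∧ LMd f = W₁ ∧ LC f = a₁ + a₂ := by
  have hc := congrArg MonoidAlgebra.coeff h
  simp only [LTerm, trm, MonoidAlgebra.coeff_add, MonoidAlgebra.coeff_single] at hc
  obtain rfl := Finsupp.eq_of_single_eq_single_add_single h₁ h₂ hc
  rw [← Finsupp.single_add, Finsupp.single_eq_single_iff] at hc
  exact ⟨rfl, hc.resolve_right fun h => LC_ne_zero hf h.1⟩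

theorem exists_isAmb_of_mul_LMd_mul_eq {g₁ g₂ : MixedAlg R k n} {m₁ m₂ : MMon k n}
    {b₁ b₂ : FreeMonoid (Fin n)} (h : m₁ * LMd g₁ * ⟨0, b₁⟩ = m₂ * LMd g₂ * ⟨0, b₂⟩) :
    ∃ M₁ B M₂ D m₃ b₃, IsAmb g₁ g₂ M₁ B M₂ D ∧
      m₁ = m₃ * M₁ ∧ b₁ = B * b₃ ∧ m₂ = m₃ * M₂ ∧ b₂ = D * b₃ := by
  have hc : m₁.c + (LMd g₁).c = m₂.c + (LMd g₂).c := by simpa using congrArg MMon.c h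
  have hw : m₁.w * (LMd g₁).w * b₁ = m₂.w * (LMd g₂).w * b₂ := by
    simpa using congrArg MMon.w h
  obtain ⟨A, B, C, D, w, b, hamb, hl₁, rfl, hl₂, rfl⟩ := WordAmb.exists_of_mul_mul_eq hw
  have hL : (LMd g₁).c ⊔ (LMd g₂).c ≤ m₁.c + (LMd g₁).c :=
    sup_le le_add_self (hc ▸ le_add_self)
  refine ⟨_, B, _, D, ⟨m₁.c + (LMd g₁).c - (LMd g₁).c ⊔ (LMd g₂).c, w⟩, b,
    ⟨A, B, C, D, hamb, rfl, rfl, rfl, rfl⟩, MMon.ext ?_ hl₁, rfl, MMon.ext ?_ hl₂, rfl⟩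
  · rw [MMon.mul_c, tsub_add_tsub_cancel hL le_sup_left, add_tsub_cancel_right]
  · rw [MMon.mul_c, tsub_add_tsub_cancel hL le_sup_right, hc, add_tsub_cancel_right]

theorem LMb_trm_mul_mul_wrd_le (hord : IsOrderSetting k n r) (m : MMon k n) (c : R)
    (g : MixedAlg R k n) (b : FreeMonoid (Fin n)) :
    LMb (trm m c * g * wrd b) ≤ (LMb g).map (m * · * (⟨0, b⟩ : MMon k n)) := by
  have hφ := (MMon.strictMono_mul_mul hord m ⟨0, b⟩).monotone
  rw [LMb, coeff_trm_mul_mul_wrd]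
  exact (Finsupp.support_max_mapDomain_le hφ _).trans
    (hφ.withBot_map (Finset.max_mono Finsupp.support_smul))

theorem LTerm_trm_mul_mul_wrd [IsDomain R] (hord : IsOrderSetting k n r) (m : MMon k n)
    {c : R} (hc : c ≠ 0) {g : MixedAlg R k n} (hg : g ≠ 0) (b : FreeMonoid (Fin n)) :
    LTerm (trm m c * g * wrd b) = trm (m * LMd g * ⟨0, b⟩) (c * LC g) := by
  have hLMd : LMd (trm m c * g * wrd b) = m * LMd g * ⟨0, b⟩ := by
    refine LMd_eq_of_LMb_eq ?_
    rw [LMb, coeff_trm_mul_mul_wrd, Finsupp.support_max_mapDomain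
      (MMon.strictMono_mul_mul hord m ⟨0, b⟩), Finsupp.support_smul_eq hc]
    exact congrArg (WithBot.map _) (LMb_eq_coe_LMd hg)
  rw [LTerm, LC, hLMd, coeff_trm_mul_mul_wrd_apply]
  rfl

theorem LMd_LC_GPolP (hord : IsOrderSetting k n r) {g₁ g₂ : MixedAlg R k n} (hg₁ : g₁ ≠ 0)
    (hg₂ : g₂ ≠ 0) {M₁ M₂ : MMon k n} {B D : FreeMonoid (Fin n)}
    (hΛ : M₁ * LMd g₁ * ⟨0, B⟩ = M₂ * LMd g₂ * ⟨0, D⟩) {c d : R}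
    (h₀ : c * LC g₁ + d * LC g₂ ≠ 0) :
    LMd (GPolP c d g₁ g₂ M₁ B M₂ D) = M₁ * LMd g₁ * ⟨0, B⟩ ∧
      LC (GPolP c d g₁ g₂ M₁ B M₂ D) = c * LC g₁ + d * LC g₂ := by
  have hcoeff : (GPolP c d g₁ g₂ M₁ B M₂ D).coeff (M₁ * LMd g₁ * ⟨0, B⟩)
      = c * LC g₁ + d * LC g₂ := by
    rw [GPolP, MonoidAlgebra.coeff_add, Finsupp.add_apply, coeff_trm_mul_mul_wrd_apply, hΛ,
      coeff_trm_mul_mul_wrd_apply]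
    rfl
  have hle : LMb (GPolP c d g₁ g₂ M₁ B M₂ D) ≤ ↑(M₁ * LMd g₁ * ⟨0, B⟩) := by
    refine (LMb_add_le _ _).trans (sup_le ?_ ?_)
    · refine (LMb_trm_mul_mul_wrd_le hord _ _ _ _).trans_eq ?_
      rw [LMb_eq_coe_LMd hg₁]
      rfl
    · refine (LMb_trm_mul_mul_wrd_le hord _ _ _ _).trans_eq ?_
      rw [LMb_eq_coe_LMd hg₂, hΛ]
      rfl
  have hLMd := LMd_eq_of_LMb_eq (Finsupp.support_max_eq_of_le (hcoeff ▸ h₀) hle)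
  exact ⟨hLMd, by rw [LC, hLMd, hcoeff]⟩

end Leading

theorem sigb_sigT {R : Type} [CommRing R] {k n r : ℕ} [LinearOrder (ModMon k n r)] [NeZero r]
    (α : SigModule R k n r) : sigb (sigT α) = sigb α := by
  by_cases hα : α = 0
  · subst hα
    simp [sigT, sigC]
  obtain ⟨σ, hσ⟩ := Finset.max_of_nonempty (Finsupp.support_nonempty_iff.2 hα)
  have hσ' : sigMd α = σ := by
    rw [sigMd, hσ]
    rfl
  have hC : sigC α ≠ 0 := by
    rw [sigC, hσ']
    exact Finsupp.mem_support_iff.1 (Finset.mem_of_max hσ)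
  rw [sigb, sigT, Finsupp.support_single _ hC, Finset.max_singleton, hσ', sigb, hσ]

theorem cofL_ne_zero {R : Type} [CommRing R] [IsDomain R] [GCDMonoid R] {k n : ℕ}
    [LinearOrder (MMon k n)] {f g : MixedAlg R k n} (hf : LC f ≠ 0) (hg : LC g ≠ 0) :
    cofL f g ≠ 0 := by
  intro h
  have hspec := Classical.choose_spec (dvd_lcm_left (LC f) (LC g))
  rw [← cofL, h, mul_zero, lcm_eq_zero_iff] at hspec
  exact hspec.elim hf hg

section Signatures

variable {R : Type} [CommRing R] {k n r : ℕ}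
variable [LinearOrder (MMon k n)] [LinearOrder (ModMon k n r)]

theorem sigb_scaleLR_le (hord : IsOrderSetting k n r) (m : MMon k n) (c : R)
    (α : SigModule R k n r) (b : FreeMonoid (Fin n)) :
    sigb (scaleLR m c α b) ≤ (sigb α).map (mulLR m · b) := by
  have hφ := (mulLR_strictMono hord m b).monotone
  rw [sigb, scaleLR_eq_mapDomain]
  exact (Finsupp.support_max_mapDomain_le hφ _).trans
    (hφ.withBot_map (Finset.max_mono Finsupp.support_smul))

theorem sigb_scaleLR [IsDomain R] (hord : IsOrderSetting k n r) (m : MMon k n) {c : R}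
    (hc : c ≠ 0) (α : SigModule R k n r) (b : FreeMonoid (Fin n)) :
    sigb (scaleLR m c α b) = (sigb α).map (mulLR m · b) := by
  rw [sigb, scaleLR_eq_mapDomain, Finsupp.support_max_mapDomain (mulLR_strictMono hord m b),
    Finsupp.support_smul_eq hc]
  rfl

variable [IsDomain R]

theorem sigb_GPolM_of_lt (hord : IsOrderSetting k n r) {c : R} (hc : c ≠ 0) (d : R)
    {β₁ β₂ : SigModule R k n r} {M₁ M₂ : MMon k n} {B D : FreeMonoid (Fin n)}
    (h : (sigb β₂).map (mulLR M₂ · D) < (sigb β₁).map (mulLR M₁ · B)) :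
    sigb (GPolM c d β₁ β₂ M₁ B M₂ D) = (sigb β₁).map (mulLR M₁ · B) := by
  rw [← sigb_scaleLR hord M₁ hc β₁ B] at h ⊢
  exact Finsupp.support_max_add_of_lt ((sigb_scaleLR_le hord M₂ d β₂ D).trans_lt h)

theorem sigb_ambSIG_of_lt [GCDMonoid R] [NeZero r] (hord : IsOrderSetting k n r)
    {g₁ g₂ : MixedAlg R k n} (hg₁ : LC g₁ ≠ 0) (hg₂ : LC g₂ ≠ 0)
    {β₁ β₂ : SigModule R k n r} {M₁ M₂ : MMon k n} {B D : FreeMonoid (Fin n)}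
    (h : (sigb β₂).map (mulLR M₂ · D) < (sigb β₁).map (mulLR M₁ · B)) :
    sigb (ambSIG g₁ g₂ β₁ β₂ M₁ B M₂ D) = (sigb β₁).map (mulLR M₁ · B) := by
  have hL := sigb_scaleLR hord M₁ (cofL_ne_zero hg₁ hg₂) β₁ B
  rw [ambSIG, if_pos ((sigb_scaleLR_le hord M₂ _ β₂ D).trans (hL ▸ h.le)), sigb_sigT, hL]

end Signatures

theorem lemma_gpol_general
    {R : Type} [CommRing R] [IsDomain R] [IsPrincipalIdealRing R] [GCDMonoid R]
    {k n r : ℕ} [NeZero r]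
    [LinearOrder (MMon k n)] [LinearOrder (ModMon k n r)]
    (hord : IsOrderSetting k n r)
    (f g₁ g₂ : MixedAlg R k n) (β₁ β₂ : SigModule R k n r)
    (hf : f ≠ 0) (hg₁ : g₁ ≠ 0) (hg₂ : g₂ ≠ 0)
    (m₁ m₂ : MMon k n) (c₁ c₂ : R) (b₁ b₂ : FreeMonoid (Fin n))
    (hc₁ : c₁ ≠ 0) (hc₂ : c₂ ≠ 0)
    (hlt : LTerm f = LTerm (trm m₁ c₁ * g₁ * wrd b₁) + LTerm (trm m₂ c₂ * g₂ * wrd b₂))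
    (hsig : sigb (scaleLR m₂ c₂ β₂ b₂) < sigb (scaleLR m₁ c₁ β₁ b₁)) :
    ∃ M₁ N₁ M₂ N₂, IsAmb g₁ g₂ M₁ N₁ M₂ N₂ ∧
      ∃ c d : R, BezoutFor c d g₁ g₂ ∧
        sigb (GPolM c d β₁ β₂ M₁ N₁ M₂ N₂) = sigb (ambSIG g₁ g₂ β₁ β₂ M₁ N₁ M₂ N₂) ∧
        ∃ (m₃ : MMon k n) (c₃ : R) (b₃ : FreeMonoid (Fin n)), c₃ ≠ 0 ∧
          LTerm (trm m₃ c₃ * GPolP c d g₁ g₂ M₁ N₁ M₂ N₂ * wrd b₃) = LTerm f ∧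
          sigb (scaleLR m₃ c₃ (GPolM c d β₁ β₂ M₁ N₁ M₂ N₂) b₃)
            = sigb (scaleLR m₁ c₁ β₁ b₁) := by
  have hLC₁ := LC_ne_zero hg₁
  have hLC₂ := LC_ne_zero hg₂
  rw [LTerm_trm_mul_mul_wrd hord m₁ hc₁ hg₁, LTerm_trm_mul_mul_wrd hord m₂ hc₂ hg₂] at hlt
  obtain ⟨hW, hLMd_f, hLC_f⟩ :=
    eq_of_LTerm_eq_trm_add_trm hf (mul_ne_zero hc₁ hLC₁) (mul_ne_zero hc₂ hLC₂) hlt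
  obtain ⟨M₁, B, M₂, D, m₃, b₃, hamb, rfl, rfl, rfl, rfl⟩ := exists_isAmb_of_mul_LMd_mul_eq hW
  rw [← MMon.mul_mul_mk_zero_assoc, ← MMon.mul_mul_mk_zero_assoc] at hW
  rw [← MMon.mul_mul_mk_zero_assoc] at hLMd_f
  have hΛ := (MMon.strictMono_mul_mul hord m₃ ⟨0, b₃⟩).injective hW
  obtain ⟨c, d, hbez, hc⟩ := exists_bezout_left_ne_zero (LC g₁) hLC₂
  have hgcd : c * LC g₁ + d * LC g₂ ≠ 0 := hbez ▸ gcd_ne_zero_of_right hLC₂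
  obtain ⟨hLMd_G, hLC_G⟩ := LMd_LC_GPolP hord hg₁ hg₂ hΛ hgcd
  obtain ⟨c₃, hc₃⟩ : gcd (LC g₁) (LC g₂) ∣ LC f := by
    rw [hLC_f]
    exact dvd_add ((gcd_dvd_left _ _).mul_left c₁) ((gcd_dvd_right _ _).mul_left c₂)
  have hc₃₀ : c₃ ≠ 0 := by
    rintro rfl
    exact LC_ne_zero hf (by rw [hc₃, mul_zero])
  have hsig_a : (sigb β₂).map (mulLR M₂ · D) < (sigb β₁).map (mulLR M₁ · B) := by
    rw [sigb_scaleLR hord _ hc₁, sigb_scaleLR hord _ hc₂, ← map_mulLR_map_mulLR,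
      ← map_mulLR_map_mulLR] at hsig
    exact (mulLR_strictMono hord m₃ b₃).withBot_map.lt_iff_lt.1 hsig
  have hsig_G := sigb_GPolM_of_lt hord hc d hsig_a
  refine ⟨M₁, B, M₂, D, hamb, c, d, hbez,
    hsig_G.trans (sigb_ambSIG_of_lt hord hLC₁ hLC₂ hsig_a).symm, m₃, c₃, b₃, hc₃₀, ?_, ?_⟩
  · rw [LTerm_trm_mul_mul_wrd hord m₃ hc₃₀ (ne_zero_of_LC_ne_zero (hLC_G ▸ hgcd)), hLMd_G,
      hLC_G, hbez, LTerm, hLMd_f, hc₃, mul_comm]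
  · rw [sigb_scaleLR hord m₃ hc₃₀, hsig_G, map_mulLR_map_mulLR, sigb_scaleLR hord _ hc₁]

/-- Lemma 4.9: significance of G-polynomials.  If
`LT(f) = LT(t₁ g₁ b₁) + LT(t₂ g₂ b₂)` and `sig(t₁ β₁ b₁) ≻ sig(t₂ β₂ b₂)`,
then there exist a G-polynomial `g₃^{[β₃]} = G-Pol(a)` of some ambiguity
`a ∈ amb(g₁^{[β₁]}, g₂^{[β₂]})` (with Bézout coefficients chosen so that
`sig(G-Pol(a)) ≃ SIG(a)`), `t₃ ∈ T(A)` and `b₃ ∈ ⟨Y⟩` such that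
`LT(t₃ g₃ b₃) = LT(f)` and `sig(t₃ β₃ b₃) ≃ sig(t₁ β₁ b₁)`. -/
theorem lemma_gpol
    {R : Type} [CommRing R] [IsDomain R] [IsPrincipalIdealRing R] [GCDMonoid R]
    {k n r : ℕ} [NeZero r]
    [LinearOrder (MMon k n)] [LinearOrder (ModMon k n r)]
    (hord : IsOrderSetting k n r)
    (F : Fin r → MixedAlg R k n)
    (f g₁ g₂ : MixedAlg R k n) (α β₁ β₂ : SigModule R k n r)
    (hlabf : barMap F α = f) (hlab₁ : barMap F β₁ = g₁) (hlab₂ : barMap F β₂ = g₂)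
    (hf : f ≠ 0) (hg₁ : g₁ ≠ 0) (hg₂ : g₂ ≠ 0)
    (m₁ m₂ : MMon k n) (c₁ c₂ : R) (b₁ b₂ : FreeMonoid (Fin n))
    (hc₁ : c₁ ≠ 0) (hc₂ : c₂ ≠ 0)
    (hlt : LTerm f = LTerm (trm m₁ c₁ * g₁ * wrd b₁) + LTerm (trm m₂ c₂ * g₂ * wrd b₂))
    (hsig : sigb (scaleLR m₂ c₂ β₂ b₂) < sigb (scaleLR m₁ c₁ β₁ b₁)) :
    ∃ M₁ N₁ M₂ N₂, IsAmb g₁ g₂ M₁ N₁ M₂ N₂ ∧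
      ∃ c d : R, BezoutFor c d g₁ g₂ ∧
        sigb (GPolM c d β₁ β₂ M₁ N₁ M₂ N₂) = sigb (ambSIG g₁ g₂ β₁ β₂ M₁ N₁ M₂ N₂) ∧
        ∃ (m₃ : MMon k n) (c₃ : R) (b₃ : FreeMonoid (Fin n)), c₃ ≠ 0 ∧
          LTerm (trm m₃ c₃ * GPolP c d g₁ g₂ M₁ N₁ M₂ N₂ * wrd b₃) = LTerm f ∧
          sigb (scaleLR m₃ c₃ (GPolM c d β₁ β₂ M₁ N₁ M₂ N₂) b₃)
            = sigb (scaleLR m₁ c₁ β₁ b₁) :=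
  lemma_gpol_general hord f g₁ g₂ β₁ β₂ hf hg₁ hg₂ m₁ m₂ c₁ c₂ b₁ b₂ hc₁ hc₂ hlt hsig
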